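/- Protocol 4 applied to two copies of P⁴⁵_δ (second box gets x₂=x₁, y₂=0, z₂=z₁) yields δ(δP^{xy} + (1−δ)P^{xz}) + (1−δ)P^{45}_δ with class-41 Bell value V' = −4δ² + 10δ + 7, which exceeds V = 4δ + 7 for all 0 < δ ≤ 1. -/
import Mathlib


/-- A tripartite box: `P a b c x y z = P(abc|xyz)`. -/
abbrev TriBox := Bool → Bool → Bool → Bool → Bool → Bool → ℝ

/-- The perfect box `P^g`: probability `1/4` iff `a⊕b⊕c = g(x,y,z)`. -/
noncomputable def perfectBox (g : Bool → Bool → Bool → Bool) : TriBox :=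
  fun a b c x y z => if Bool.xor a (Bool.xor b c) = g x y z then (1 : ℝ) / 4 else 0

/-- Class-44 polynomial `xyz`. -/
def f44 (x y z : Bool) : Bool := x && y && z
/-- Class-45 polynomial `xy ⊕ xz`. -/
def f45 (x y z : Bool) : Bool := Bool.xor (x && y) (x && z)
/-- Class-46 polynomial `xy ⊕ yz ⊕ xz`. -/
def f46 (x y z : Bool) : Bool := Bool.xor (x && y) (Bool.xor (y && z) (x && z))
/-- The correlated box polynomial `0`. -/
def fc (_ _ _ : Bool) : Bool := false

/-- The noisy box `P^N_δ = δ P^N + (1−δ) P^c`. -/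
noncomputable def mixBox (δ : ℝ) (g : Bool → Bool → Bool → Bool) : TriBox :=
  fun a b c x y z =>
    δ * perfectBox g a b c x y z + (1 - δ) * perfectBox fc a b c x y z

noncomputable def corr3 (P : TriBox) (x y z : Bool) : ℝ :=
  ∑ a : Bool, ∑ b : Bool, ∑ c : Bool,
    (if Bool.xor a (Bool.xor b c) then (-1 : ℝ) else 1) * P a b c x y z

noncomputable def corrAB (P : TriBox) (x y : Bool) : ℝ :=
  ∑ a : Bool, ∑ b : Bool, ∑ c : Bool,
    (if Bool.xor a b then (-1 : ℝ) else 1) * P a b c x y false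

noncomputable def corrAC (P : TriBox) (x z : Bool) : ℝ :=
  ∑ a : Bool, ∑ b : Bool, ∑ c : Bool,
    (if Bool.xor a c then (-1 : ℝ) else 1) * P a b c x false z

noncomputable def corrBC (P : TriBox) (y z : Bool) : ℝ :=
  ∑ a : Bool, ∑ b : Bool, ∑ c : Bool,
    (if Bool.xor b c then (-1 : ℝ) else 1) * P a b c false y z

noncomputable def corrA (P : TriBox) (x : Bool) : ℝ :=
  ∑ a : Bool, ∑ b : Bool, ∑ c : Bool,
    (if a then (-1 : ℝ) else 1) * P a b c x false false

noncomputable def corrB (P : TriBox) (y : Bool) : ℝ :=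
  ∑ a : Bool, ∑ b : Bool, ∑ c : Bool,
    (if b then (-1 : ℝ) else 1) * P a b c false y false

noncomputable def corrC (P : TriBox) (z : Bool) : ℝ :=
  ∑ a : Bool, ∑ b : Bool, ∑ c : Bool,
    (if c then (-1 : ℝ) else 1) * P a b c false false z

/-- The class-41 Bell expression. -/
noncomputable def bell41 (P : TriBox) : ℝ :=
  -(corrA P false) - corrB P false - corrC P false +
    corrAB P false true + corrAB P true false - corrAB P true true +
    corrAC P false true + corrAC P true false - corrAC P true true +
    corrBC P false false +
    3 * corr3 P false false false + corr3 P false false true +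
    corr3 P false true false + 2 * corr3 P false true true +
    4 * corr3 P true false false - corr3 P true false true -
    corr3 P true true false - 2 * corr3 P true true true

/-- Wire two boxes: the first box receives the protocol input `xyz`, the second box
receives inputs `x₂(x,y,z), y₂(x,y,z), z₂(x,y,z)`; the final outputs are
`a = 1⊕a₁⊕a₂`, `b = b₁⊕b₂`, `c = 1⊕c₁⊕c₂`. -/
noncomputable def wire (P Q : TriBox) (x₂ y₂ z₂ : Bool → Bool → Bool → Bool) : TriBox :=
  fun a b c x y z =>
    ∑ a₁ : Bool, ∑ b₁ : Bool, ∑ c₁ : Bool, ∑ a₂ : Bool, ∑ b₂ : Bool, ∑ c₂ : Bool,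
      if a = !(Bool.xor a₁ a₂) ∧ b = Bool.xor b₁ b₂ ∧ c = !(Bool.xor c₁ c₂) then
        P a₁ b₁ c₁ x y z * Q a₂ b₂ c₂ (x₂ x y z) (y₂ x y z) (z₂ x y z)
      else 0

set_option maxHeartbeats 4000000 in
/-- Protocol 4 applied to two copies of `P⁴⁵_δ` (second box gets `x₂=x₁, y₂=0, z₂=z₁`)
yields `δ(δP^{xy} + (1−δ)P^{xz}) + (1−δ)P⁴⁵_δ` with class-41 Bell value
`V' = −4δ² + 10δ + 7 > V = 4δ + 7` for all `0 < δ ≤ 1`. -/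
theorem protocol4 (δ : ℝ) (hδ : 0 ≤ δ) (hδ' : δ ≤ 1) :
    (∀ a b c x y z : Bool,
        wire (mixBox δ f45) (mixBox δ f45)
            (fun x _ _ => x) (fun _ _ _ => false) (fun _ _ z => z) a b c x y z =
          δ * (δ * perfectBox (fun x y _ => x && y) a b c x y z +
              (1 - δ) * perfectBox (fun x _ z => x && z) a b c x y z) +
            (1 - δ) * mixBox δ f45 a b c x y z) ∧
    bell41 (wire (mixBox δ f45) (mixBox δ f45)
        (fun x _ _ => x) (fun _ _ _ => false) (fun _ _ z => z)) =
      -4 * δ ^ 2 + 10 * δ + 7 ∧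
    (0 < δ →
      bell41 (wire (mixBox δ f45) (mixBox δ f45)
          (fun x _ _ => x) (fun _ _ _ => false) (fun _ _ z => z)) > 4 * δ + 7) := by
  have key : ∀ a b c x y z : Bool,
      wire (mixBox δ f45) (mixBox δ f45)
          (fun x _ _ => x) (fun _ _ _ => false) (fun _ _ z => z) a b c x y z =
        δ * (δ * perfectBox (fun x y _ => x && y) a b c x y z +
            (1 - δ) * perfectBox (fun x _ z => x && z) a b c x y z) +
          (1 - δ) * mixBox δ f45 a b c x y z := by
    intro a b c x y z
    cases a <;> cases b <;> cases c <;> cases x <;> cases y <;> cases z <;>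
      · simp only [wire, mixBox, perfectBox, f45, fc, Fintype.sum_bool]
        norm_num
        try ring
  have hfun : wire (mixBox δ f45) (mixBox δ f45)
      (fun x _ _ => x) (fun _ _ _ => false) (fun _ _ z => z) =
      fun a b c x y z =>
        δ * (δ * perfectBox (fun x y _ => x && y) a b c x y z +
            (1 - δ) * perfectBox (fun x _ z => x && z) a b c x y z) +
          (1 - δ) * mixBox δ f45 a b c x y z := by
    funext a b c x y z; exact key a b c x y z
  have hbell : bell41 (wire (mixBox δ f45) (mixBox δ f45)
      (fun x _ _ => x) (fun _ _ _ => false) (fun _ _ z => z)) =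
      -4 * δ ^ 2 + 10 * δ + 7 := by
    rw [hfun]
    simp only [bell41, corr3, corrAB, corrAC, corrBC, corrA, corrB, corrC,
      mixBox, perfectBox, f45, fc, Fintype.sum_bool]
    norm_num
    ring
  exact ⟨key, hbell, fun hpos => by rw [hbell]; nlinarith⟩
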